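/- Let Λ be a Grassmann algebra, n ≥ 1, c_1,…,c_n invertible even elements with ∏_{k=1}^n c_k = 1 (Ramond case), and θ_1,…,θ_n odd elements. Let g = M_n⋯M_1 be the monodromy matrix [[1,0,0],[−*₁,1,0],[−*₃,*₂,1]] from the product formula. Then g is conjugate, by a lower-triangular element U of OSp(1|2) fixing the puncture direction, to a matrix of the form [[1,0,0],[0,1,0],[B',0,1]] if and only if *₁ = Σ_{k=1}^n θ_k ∏_{j=1}^{k-1} c_j⁻¹ = 0. Equivalently, the Ramond monodromy constraint is the single linear equation Σ_{k=1}^n θ_k ∏_{j=1}^{k-1} c_j⁻¹ = 0 in the odd variables θ_k. -/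
import Mathlib


open Matrix

/-- The supertranspose of a 3×3 supermatrix `[[a,α,b],[γ,f,β],[c,δ,d]]`,
namely `[[a,γ,c],[-α,f,-δ],[b,β,d]]`. -/
def sTr {R : Type*} [Ring R] (g : Matrix (Fin 3) (Fin 3) R) : Matrix (Fin 3) (Fin 3) R :=
  !![g 0 0, g 1 0, g 2 0; -(g 0 1), g 1 1, -(g 2 1); g 0 2, g 1 2, g 2 2]

/-- the Ramond monodromy constraint.  In the Ramond case `∏ c_k = 1`, the
monodromy matrix `g = [[1,0,0],[−*₁,1,0],[−*₃,*₂,1]]` is conjugate, by a lower-triangular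
element `U` of `OSp(1|2)` (fixing the puncture direction, with invertible middle entry),
to the standard form `[[1,0,0],[0,1,0],[B',0,1]]` if and only if
`*₁ = Σ_k θ_k ∏_{j=1}^{k-1} c_j⁻¹ = 0`. -/
theorem ramond_monodromy_constraint {R : Type*} [Ring R] {n : ℕ} (hn : 1 ≤ n)
    (c : Fin n → Rˣ) (θ : Fin n → R)
    (hc : ∀ (k : Fin n) (x : R), (c k : R) * x = x * (c k : R))
    (hθsq : ∀ k, θ k * θ k = 0)
    (hθ : ∀ i j, θ i * θ j = -(θ j * θ i))
    (hprod : (List.ofFn fun j : Fin n => ((c j : R))).prod = 1) :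
    let J : Matrix (Fin 3) (Fin 3) R := !![0, 0, 1; 0, 1, 0; -1, 0, 0]
    let P : ℕ → R := fun m => ((List.ofFn fun j : Fin n => (((c j)⁻¹ : Rˣ) : R)).take m).prod
    let Q : ℕ → R := fun m => ((List.ofFn fun j : Fin n => ((c j : R))).drop m).prod
    let s1 : R := ∑ k : Fin n, θ k * P (k : ℕ)
    let s2 : R := ∑ k : Fin n, θ k * Q (k : ℕ)
    let s3 : R := (∑ j : Fin n, P (j : ℕ) * Q (j : ℕ)) +
      ∑ j : Fin n, ∑ i ∈ Finset.univ.filter (fun i : Fin n => i < j),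
        θ i * θ j * (P (j : ℕ) * Q (j : ℕ))
    let g : Matrix (Fin 3) (Fin 3) R := !![1, 0, 0; -s1, 1, 0; -s3, s2, 1]
    (∃ (a γ cc f δ d B' : R) (U : Matrix (Fin 3) (Fin 3) R),
        U = !![a, 0, 0; γ, f, 0; cc, δ, d] ∧ IsUnit f ∧
        sTr U * J * U = J ∧
        U * g = !![1, 0, 0; 0, 1, 0; B', 0, 1] * U) ↔ s1 = 0 := by
  intro J P Q s1 s2 s3 g
  constructor
  · rintro ⟨a, γ, cc, f, δ, d, B', U, rfl, hf, -, hUg⟩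
    have h10 := congrFun (congrFun hUg 1) 0
    simp [Matrix.mul_apply, Fin.sum_univ_three, g] at h10
    have hfs : f * s1 = 0 := h10
    rcases hf with ⟨u, rfl⟩
    calc s1 = (↑u⁻¹ : R) * ((u : R) * s1) := by rw [← mul_assoc, Units.inv_mul, one_mul]
    _ = 0 := by rw [hfs, mul_zero]
  · intro hs1
    -- s2 = s1 since Q k = P k
    set l : List R := List.ofFn fun j : Fin n => ((c j : R)) with hl
    have hlen : l.length = n := by simp [hl]
    have hcinv : ∀ (k : Fin n) (x : R),
        (((c k)⁻¹ : Rˣ) : R) * x = x * (((c k)⁻¹ : Rˣ) : R) := by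
      intro k x
      calc (((c k)⁻¹ : Rˣ) : R) * x
          = (((c k)⁻¹ : Rˣ) : R) * (x * (c k : R)) * (((c k)⁻¹ : Rˣ) : R) := by
            rw [mul_assoc, mul_assoc, Units.mul_inv, mul_one]
        _ = (((c k)⁻¹ : Rˣ) : R) * ((c k : R) * x) * (((c k)⁻¹ : Rˣ) : R) := by rw [hc]
        _ = x * (((c k)⁻¹ : Rˣ) : R) := by
            rw [← mul_assoc, Units.inv_mul, one_mul]
    have hPT : ∀ m : ℕ, m ≤ n → P m * (l.take m).prod = 1 := by
      intro m
      induction m with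
      | zero => intro _; simp [P]
      | succ m ih =>
        intro hm
        have hm' : m < n := hm
        have h1 : m < (List.ofFn fun j : Fin n => (((c j)⁻¹ : Rˣ) : R)).length := by simp [hm']
        have h2 : m < l.length := by simp [hlen, hm']
        have e1 : P (m + 1) = P m * (((c ⟨m, hm'⟩)⁻¹ : Rˣ) : R) := by
          simp only [P, List.prod_take_succ _ _ h1]
          congr 1
          simp [List.getElem_ofFn]
        have e2 : (l.take (m + 1)).prod = (l.take m).prod * (c ⟨m, hm'⟩ : R) := by
          rw [List.prod_take_succ _ _ h2]
          congr 1
          simp [hl, List.getElem_ofFn]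
        rw [e1, e2]
        calc P m * (((c ⟨m, hm'⟩)⁻¹ : Rˣ) : R) * ((l.take m).prod * (c ⟨m, hm'⟩ : R))
            = P m * ((l.take m).prod * (c ⟨m, hm'⟩ : R) * (((c ⟨m, hm'⟩)⁻¹ : Rˣ) : R)) := by
              rw [mul_assoc, hcinv]
          _ = P m * (l.take m).prod := by rw [mul_assoc, Units.mul_inv, mul_one]
          _ = 1 := ih (le_of_lt hm')
    have hQP : ∀ k : Fin n, Q (k : ℕ) = P (k : ℕ) := by
      intro k
      have h1 : (l.take (k : ℕ)).prod * Q (k : ℕ) = 1 := by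
        have := List.prod_take_mul_prod_drop l (k : ℕ)
        rw [hprod] at this
        exact this
      calc Q (k : ℕ) = (P (k : ℕ) * (l.take (k : ℕ)).prod) * Q (k : ℕ) := by
            rw [hPT _ (le_of_lt k.isLt), one_mul]
        _ = P (k : ℕ) * ((l.take (k : ℕ)).prod * Q (k : ℕ)) := by rw [mul_assoc]
        _ = P (k : ℕ) := by rw [h1, mul_one]
    have hs2 : s2 = 0 := by
      have : s2 = s1 := Finset.sum_congr rfl fun k _ => by rw [hQP k]
      rw [this, hs1]
    have hid : (!![1, 0, 0; 0, 1, 0; 0, 0, 1] : Matrix (Fin 3) (Fin 3) R) = 1 := by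
      rw [Matrix.one_fin_three]
    refine ⟨1, 0, 0, 1, 0, 1, -s3, !![1, 0, 0; 0, 1, 0; 0, 0, 1], rfl, isUnit_one, ?_, ?_⟩
    · have hsTr : sTr (!![1, 0, 0; 0, 1, 0; 0, 0, 1] : Matrix (Fin 3) (Fin 3) R)
          = !![1, 0, 0; 0, 1, 0; 0, 0, 1] := by
        rw [sTr]
        simp [Matrix.vecHead, Matrix.vecTail]
      rw [hsTr, hid, one_mul, mul_one]
    · rw [hid, one_mul, mul_one]
      show (!![1, 0, 0; -s1, 1, 0; -s3, s2, 1] : Matrix (Fin 3) (Fin 3) R) = _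
      rw [hs1, hs2, neg_zero]
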